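/- arXiv:0712.0489 — 2 statements merged into one kernel-verified Lean document; each statement's English description precedes it below -/
import Mathlib

section
/- Let G be an infinite (g,o)-growing graph with g ≥ 1. Fix i ∈ {0,…,m}, S ⊆ L_i and U = F_{i+1} ∪ S. Then for every subset C ⊆ U one has |∂₊C| − |∂₋C| ≥ g|C|. -/
/- Common framework: Ising model with boundary conditions on (finite pieces of)
   locally finite graphs, heat-bath Glauber dynamics quantities. -/

open Finset
open scoped Classical

noncomputable section

namespace IsingGlauber

/-- The real spin value of a Boolean spin: `true ↦ +1`, `false ↦ -1`. -/
def spin (b : Bool) : ℝ := if b then 1 else -1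

variable {V : Type*}

/-- Neighbourhood finset of a vertex, from an explicit local finiteness witness. -/
def nbr (G : SimpleGraph V) (hlf : G.LocallyFinite) (x : V) : Finset V :=
  @SimpleGraph.neighborFinset V G x (hlf x)

/-- `G` is `(g,o)`-growing: every vertex `x` (say at distance `r` from `o`) has at
    least `g` more neighbours in level `r+1` than in the ball of radius `r`. -/
def IsGrowing (G : SimpleGraph V) (hlf : G.LocallyFinite) (g : ℕ) (o : V) : Prop :=
  ∀ x : V,
    ((nbr G hlf x).filter fun z => G.dist o z ≤ G.dist o x).card + g ≤
      ((nbr G hlf x).filter fun z => G.dist o z = G.dist o x + 1).card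

variable [DecidableEq V]

/-- External vertex boundary of a finite vertex set. -/
def vbd (G : SimpleGraph V) (hlf : G.LocallyFinite) (A : Finset V) : Finset V :=
  A.biUnion (fun a => nbr G hlf a) \ A

/-- Closure `A ∪ ∂_V A` of a finite vertex set. -/
def cl (G : SimpleGraph V) (hlf : G.LocallyFinite) (A : Finset V) : Finset V :=
  A ∪ vbd G hlf A

/-- Ising Hamiltonian (zero field) with boundary: `Σ_{(x,y) ∈ E(A ∪ ∂_V A)} σ_x σ_y`,
    the sum over edges with both endpoints in `A ∪ ∂_V A` (each edge counted once). -/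
def energyB (G : SimpleGraph V) (hlf : G.LocallyFinite) (A : Finset V) (σ : V → Bool) : ℝ :=
  (1 / 2) * ∑ x ∈ cl G hlf A, ∑ y ∈ (cl G hlf A).filter (fun y => G.Adj x y),
    spin (σ x) * spin (σ y)

/-- Free-boundary Ising Hamiltonian: `Σ_{(x,y) ∈ E(A)} σ_x σ_y`,
    the sum over edges with both endpoints in `A` (each edge counted once). -/
def energyF (G : SimpleGraph V) (A : Finset V) (σ : V → Bool) : ℝ :=
  (1 / 2) * ∑ x ∈ A, ∑ y ∈ A.filter (fun y => G.Adj x y), spin (σ x) * spin (σ y)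

/-- The configuration equal to `p` on `A` and to `η` off `A`. -/
def patch (A : Finset V) (η : V → Bool) (p : ∀ a ∈ A, Bool) : V → Bool :=
  fun v => if h : v ∈ A then p v h else η v

/-- Unnormalised Gibbs sum over configurations agreeing with `η` off `A`,
    with energy functional `E` (which should already include the factor `β`). -/
def wsum (E : (V → Bool) → ℝ) (A : Finset V) (η : V → Bool) (f : (V → Bool) → ℝ) : ℝ :=
  ∑ p ∈ A.pi (fun _ => (Finset.univ : Finset Bool)),
    Real.exp (E (patch A η p)) * f (patch A η p)

/-- Gibbs expectation of `f` for the measure on region `A` with boundary condition `η`. -/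
def gExp (E : (V → Bool) → ℝ) (A : Finset V) (η : V → Bool) (f : (V → Bool) → ℝ) : ℝ :=
  wsum E A η f / wsum E A η (fun _ => 1)

/-- Gibbs probability of an event. -/
def gProb (E : (V → Bool) → ℝ) (A : Finset V) (η : V → Bool) (P : (V → Bool) → Prop) : ℝ :=
  gExp E A η (fun σ => if P σ then 1 else 0)

/-- Gibbs variance of `f`. -/
def gVar (E : (V → Bool) → ℝ) (A : Finset V) (η : V → Bool) (f : (V → Bool) → ℝ) : ℝ :=
  gExp E A η (fun σ => f σ ^ 2) - gExp E A η f ^ 2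

/-- Dirichlet form of the heat-bath Glauber dynamics:
    `D(f) = Σ_{x ∈ A} μ(Var_x(f))`, where `Var_x(f)(σ)` is the variance of `f`
    under the one-site conditional Gibbs measure at `x` given `σ` elsewhere. -/
def dirich (E : (V → Bool) → ℝ) (A : Finset V) (η : V → Bool) (f : (V → Bool) → ℝ) : ℝ :=
  ∑ x ∈ A, gExp E A η (fun σ => gVar E {x} σ f)

/-- Spectral gap `c_gap(μ) = inf { D(f)/Var(f) : Var(f) ≠ 0 }`. -/
def cgap (E : (V → Bool) → ℝ) (A : Finset V) (η : V → Bool) : ℝ :=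
  sInf {r : ℝ | ∃ f : (V → Bool) → ℝ, gVar E A η f ≠ 0 ∧ r = dirich E A η f / gVar E A η f}

/-- The edge boundary of `C`, encoded as ordered pairs `(u,v)` with `u ∈ C`,
    `v ∉ C` and `u ~ v`; these pairs are in bijection with the boundary edges. -/
def obd (G : SimpleGraph V) (hlf : G.LocallyFinite) (C : Finset V) : Finset (V × V) :=
  (C ×ˢ C.biUnion (fun c => nbr G hlf c)).filter (fun p => G.Adj p.1 p.2 ∧ p.2 ∉ C)

end IsingGlauber

open IsingGlauber

/-!
Count boundary edges of `C` as ordered pairs `(x, z)` with `x ∈ C`. At each `x ∈ C`, growth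
gives `g` more neighbours one level up than neighbours at level `≤ d(o,x)`. Summing over `C`,
the edges inside `C` going up are exactly those going down, so they cancel, leaving
`g |C| + #{boundary edges not going up} ≤ #{boundary edges going up}`. For `C ⊆ U`, every
vertex of `C` lies at level between `i` and `m`, so edges into `B_i \ S` do not go up, and
edges going up leave `C` into `U` or into level `m + 1`.
-/

namespace IsingGlauber

variable {V : Type*} (G : SimpleGraph V) (hlf : G.LocallyFinite)

theorem mem_nbr {x z : V} : z ∈ nbr G hlf x ↔ G.Adj x z := by
  simp [nbr]

variable [DecidableEq V]

theorem mem_obd {C : Finset V} {p : V × V} :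
    p ∈ obd G hlf C ↔ p.1 ∈ C ∧ G.Adj p.1 p.2 ∧ p.2 ∉ C := by
  simp only [obd, mem_filter, mem_product, mem_biUnion, mem_nbr]
  constructor
  · rintro ⟨⟨hx, -⟩, hadj, hz⟩
    exact ⟨hx, hadj, hz⟩
  · rintro ⟨hx, hadj, hz⟩
    exact ⟨⟨hx, p.1, hx, hadj⟩, hadj, hz⟩

theorem card_filter_obd (C : Finset V) (P : V × V → Prop) [DecidablePred P] :
    #((obd G hlf C).filter P) =
      ∑ x ∈ C, #((nbr G hlf x).filter fun z => P (x, z) ∧ z ∉ C) := by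
  rw [card_eq_sum_card_fiberwise (f := Prod.fst) (t := C)
    fun p hp => ((mem_obd G hlf).1 (mem_filter.1 hp).1).1]
  refine sum_congr rfl fun x hx =>
    Eq.trans ?_ (card_map ⟨Prod.mk x, Prod.mk_right_injective x⟩)
  refine congrArg card (ext fun ⟨y, z⟩ => ?_)
  simp only [mem_filter, mem_obd, mem_map, mem_nbr, Function.Embedding.coeFn_mk, Prod.mk.injEq]
  constructor
  · rintro ⟨⟨⟨-, hadj, hz⟩, hP⟩, rfl⟩
    exact ⟨z, ⟨hadj, hP, hz⟩, rfl, rfl⟩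
  · rintro ⟨z, ⟨hadj, hP, hz⟩, rfl, rfl⟩
    exact ⟨⟨⟨hx, hadj, hz⟩, hP⟩, rfl⟩

theorem nbr_filter_mem_eq (C : Finset V) (x : V) (R : V → Prop) [DecidablePred R] :
    (nbr G hlf x).filter (fun z => R z ∧ z ∈ C) = C.filter fun z => G.Adj x z ∧ R z := by
  ext z
  simp only [mem_filter, mem_nbr]
  tauto

theorem sum_card_nbr_filter_mem_comm (C : Finset V) (R : V → V → Prop)
    [∀ x z, Decidable (R x z)] :
    ∑ x ∈ C, #((nbr G hlf x).filter fun z => R x z ∧ z ∈ C) =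
      ∑ x ∈ C, #((nbr G hlf x).filter fun z => R z x ∧ z ∈ C) := by
  simp only [nbr_filter_mem_eq]
  refine (sum_card_bipartiteAbove_eq_sum_card_bipartiteBelow
    (r := fun x z => G.Adj x z ∧ R x z)).trans (sum_congr rfl fun x _ => ?_)
  simp only [bipartiteBelow, G.adj_comm]

section Growing

variable {G hlf} {g : ℕ} {o : V}

theorem IsGrowing.card_add_le (hgrow : IsGrowing G hlf g o) (C : Finset V) (x : V) :
    #((nbr G hlf x).filter fun z => G.dist o z ≤ G.dist o x ∧ z ∉ C) +
        #((nbr G hlf x).filter fun z => G.dist o x = G.dist o z + 1 ∧ z ∈ C) + g ≤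
      #((nbr G hlf x).filter fun z => G.dist o z = G.dist o x + 1 ∧ z ∉ C) +
        #((nbr G hlf x).filter fun z => G.dist o z = G.dist o x + 1 ∧ z ∈ C) := by
  have hup := card_filter_add_card_filter_not
    (s := (nbr G hlf x).filter fun z => G.dist o z = G.dist o x + 1) (· ∈ C)
  have hlow := card_filter_add_card_filter_not
    (s := (nbr G hlf x).filter fun z => G.dist o z ≤ G.dist o x) (· ∈ C)
  have hdown : #((nbr G hlf x).filter fun z => G.dist o x = G.dist o z + 1 ∧ z ∈ C) ≤
      #(((nbr G hlf x).filter fun z => G.dist o z ≤ G.dist o x).filter (· ∈ C)) :=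
    card_le_card fun z hz => by
      simp only [mem_filter] at hz ⊢
      obtain ⟨hadj, hdist, hzC⟩ := hz
      exact ⟨⟨hadj, by omega⟩, hzC⟩
  have := hgrow x
  simp only [filter_filter] at hup hlow hdown
  omega

theorem IsGrowing.mul_card_add_card_le (hgrow : IsGrowing G hlf g o) (C : Finset V) :
    g * #C + #((obd G hlf C).filter fun p => G.dist o p.2 ≤ G.dist o p.1) ≤
      #((obd G hlf C).filter fun p => G.dist o p.2 = G.dist o p.1 + 1) := by
  have hsum := sum_le_sum fun x (_ : x ∈ C) => hgrow.card_add_le C x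
  have hinner := sum_card_nbr_filter_mem_comm G hlf C fun x z => G.dist o z = G.dist o x + 1
  simp only [sum_add_distrib, sum_const, smul_eq_mul] at hsum
  rw [card_filter_obd, card_filter_obd]
  linarith

end Growing

end IsingGlauber

theorem statement6_general {V : Type*} [DecidableEq V]
    (G : SimpleGraph V) (hlf : G.LocallyFinite)
    (g : ℕ) (o : V)
    (hgrow : IsGrowing G hlf g o)
    (m i : ℕ) (him : i ≤ m) (Bm : Finset V) (hBm : ∀ v : V, v ∈ Bm ↔ G.dist o v ≤ m)
    (S : Finset V) (hS : ∀ v ∈ S, G.dist o v = i)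
    (U : Finset V) (hU : U = Bm.filter (fun v => i + 1 ≤ G.dist o v) ∪ S)
    (C : Finset V) (hC : C ⊆ U) :
    (g : ℤ) * (C.card : ℤ) ≤
      (((obd G hlf C).filter (fun p => p.2 ∈ U ∨ G.dist o p.2 = m + 1)).card : ℤ) -
        (((obd G hlf C).filter (fun p => G.dist o p.2 ≤ i ∧ p.2 ∉ S)).card : ℤ) := by
  have hlevel : ∀ x ∈ C, i ≤ G.dist o x ∧ G.dist o x ≤ m := by
    intro x hx
    have hxU := hC hx
    rw [hU, mem_union, mem_filter, hBm] at hxU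
    rcases hxU with h | h
    · omega
    · have := hS x h
      omega
  have hminus : #((obd G hlf C).filter fun p => G.dist o p.2 ≤ i ∧ p.2 ∉ S) ≤
      #((obd G hlf C).filter fun p => G.dist o p.2 ≤ G.dist o p.1) := by
    refine card_le_card fun p => ?_
    simp only [mem_filter]
    rintro ⟨hp, hpi, -⟩
    exact ⟨hp, hpi.trans (hlevel _ ((mem_obd G hlf).1 hp).1).1⟩
  have hplus : #((obd G hlf C).filter fun p => G.dist o p.2 = G.dist o p.1 + 1) ≤
      #((obd G hlf C).filter fun p => p.2 ∈ U ∨ G.dist o p.2 = m + 1) := by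
    refine card_le_card fun p => ?_
    simp only [mem_filter]
    rintro ⟨hp, hup⟩
    obtain ⟨hi, hm⟩ := hlevel _ ((mem_obd G hlf).1 hp).1
    refine ⟨hp, ?_⟩
    rcases hm.lt_or_eq with hlt | heq
    · left
      rw [hU]
      exact mem_union_left _ (mem_filter.2 ⟨(hBm _).2 (by omega), by omega⟩)
    · right
      omega
  have := hgrow.mul_card_add_card_le C
  omega

/-- Lemma 3.4 of the paper: for a `(g,o)`-growing graph and
`C ⊆ U = F_{i+1} ∪ S`, one has `|∂₊C| - |∂₋C| ≥ g|C|`, where `∂₊C` are the boundary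
edges of `C` whose outside endpoint lies in `U ∪ ∂_V B` and `∂₋C` those whose
outside endpoint lies in `B_i \ S`. -/
theorem statement6 {V : Type*} [DecidableEq V] [Infinite V]
    (G : SimpleGraph V) (hlf : G.LocallyFinite) (hconn : G.Connected)
    (g : ℕ) (hg : 1 ≤ g) (o : V)
    (hgrow : IsGrowing G hlf g o)
    (m i : ℕ) (him : i ≤ m) (Bm : Finset V) (hBm : ∀ v : V, v ∈ Bm ↔ G.dist o v ≤ m)
    (S : Finset V) (hS : ∀ v ∈ S, G.dist o v = i)
    (U : Finset V) (hU : U = Bm.filter (fun v => i + 1 ≤ G.dist o v) ∪ S)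
    (C : Finset V) (hC : C ⊆ U) :
    (g : ℤ) * (C.card : ℤ) ≤
      (((obd G hlf C).filter (fun p => p.2 ∈ U ∨ G.dist o p.2 = m + 1)).card : ℤ) -
        (((obd G hlf C).filter (fun p => G.dist o p.2 ≤ i ∧ p.2 ∉ S)).card : ℤ) :=
  statement6_general G hlf g o hgrow m i him Bm hBm S hS U hU C hC
end
end

section
/- Let G be an infinite (g,o)-growing graph with g ≥ 1 and maximal degree Δ < ∞, set δ = 1 + log(Δ+1), and fix i ∈ {0,…,m}, S ⊆ L_i, U = F_{i+1} ∪ S. Then for every β with β′ = 2gβ − δ > 0 and every vertex x ∈ S, μ_U^−(σ_x = −1) ≤ e^{−β′}/(1 − e^{−β′}). -/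
/- Common framework: Ising model with boundary conditions on (finite pieces of)
   locally finite graphs, heat-bath Glauber dynamics quantities. -/

open Finset
open scoped Classical

noncomputable section

open IsingGlauber

/-
Peierls' argument. If `σ x = -1`, let `C` be the minus cluster of `x` in `U`. Every vertex has at
least `g` more neighbours one level up than at its own level or below; the up-neighbours of `C`
outside `C` are `+` (by maximality of `C`, or by the boundary condition), and an edge inside `C`
that goes up from one endpoint goes down from the other. Hence reversing the spins of `C` raises `Σ σ_u σ_v` by at least `2 g |C|`, and `μ(σ x = -1) ≤ Σ_C λ^|C|` with `λ = e^{-2gβ}`,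
summed over the connected sets `C ∋ x`. Removing `x` from such a set leaves components each
attached to a neighbour of `x`, which gives `φ(A, x) ≤ λ ∏_{y ~ x} (1 + φ(A \ {x}, y))` for the
generating function `φ`, and by induction `φ ≤ e λ` as soon as `Δ e λ ≤ 1`. Finally
`e λ (Δ + 1) = e^{-β'}`.
-/

theorem Finset.sum_prod_le_prod_sum_of_injOn {α ι κ R : Type*} [DecidableEq ι]
    [CommSemiring R] [PartialOrder R] [IsOrderedRing R]
    {𝒞 : Finset α} {N : Finset ι} {t : ι → Finset κ} {u : κ → R} (F : α → ι → κ)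
    (hu : ∀ y ∈ N, ∀ k ∈ t y, 0 ≤ u k) (hmaps : ∀ C ∈ 𝒞, ∀ y ∈ N, F C y ∈ t y)
    (hinj : ∀ C ∈ 𝒞, ∀ C' ∈ 𝒞, (∀ y ∈ N, F C y = F C' y) → C = C') :
    ∑ C ∈ 𝒞, ∏ y ∈ N, u (F C y) ≤ ∏ y ∈ N, ∑ k ∈ t y, u k := by
  set F' : α → ∀ y ∈ N, κ := fun C y _ => F C y
  have hinj' : Set.InjOn F' 𝒞 := fun C hC C' hC' h =>
    hinj C hC C' hC' fun y hy => congrFun (congrFun h y) hy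
  rw [Finset.prod_sum]
  calc ∑ C ∈ 𝒞, ∏ y ∈ N, u (F C y)
      = ∑ q ∈ 𝒞.image F', ∏ y ∈ N.attach, u (q y.1 y.2) := by
        rw [Finset.sum_image hinj']
        exact Finset.sum_congr rfl fun C _ => (Finset.prod_attach N (fun y => u (F C y))).symm
    _ ≤ ∑ q ∈ N.pi t, ∏ y ∈ N.attach, u (q y.1 y.2) := by
        refine Finset.sum_le_sum_of_subset_of_nonneg ?_ fun q hq _ => ?_
        · rintro _ hq
          obtain ⟨C, hC, rfl⟩ := Finset.mem_image.1 hq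
          exact Finset.mem_pi.2 (hmaps C hC)
        · exact Finset.prod_nonneg fun y _ => hu y.1 y.2 _ (Finset.mem_pi.1 hq y.1 y.2)

theorem Finset.sum_sum_ite_mem_and_notMem {α M : Type*} [DecidableEq α] [AddCommMonoid M]
    {W C : Finset α} (hCW : C ⊆ W) (r : α → α → Prop) [DecidableRel r] (f : α → α → M) :
    ∑ a ∈ W, ∑ b ∈ W.filter (r a), (if a ∈ C ∧ b ∉ C then f a b else 0) =
      ∑ a ∈ C, ∑ b ∈ (W \ C).filter (r a), f a b := by
  calc _ = ∑ a ∈ W, if a ∈ C then ∑ b ∈ (W \ C).filter (r a), f a b else 0 := by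
        refine Finset.sum_congr rfl fun a _ => ?_
        by_cases haC : a ∈ C
        · simp only [haC, true_and, if_true, ← Finset.sum_filter, Finset.filter_filter,
            Finset.sdiff_eq_filter, and_comm]
        · simp [haC]
    _ = _ := by
        rw [← Finset.sum_filter, Finset.filter_mem_eq_inter, Finset.inter_eq_right.2 hCW]

lemma Real.one_add_pow_le_exp_one {a : ℝ} {n : ℕ} (ha : 0 ≤ a) (hna : n * a ≤ 1) :
    (1 + a) ^ n ≤ Real.exp 1 :=
  calc (1 + a) ^ n ≤ Real.exp a ^ n := by
        gcongr
        linarith [Real.add_one_le_exp a]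
    _ = Real.exp (n * a) := (Real.exp_nat_mul a n).symm
    _ ≤ Real.exp 1 := Real.exp_le_exp.2 hna

namespace IsingGlauber

open Relation

variable {V : Type*}

def AdjIn (G : SimpleGraph V) (D : Finset V) (a b : V) : Prop :=
  G.Adj a b ∧ a ∈ D ∧ b ∈ D

def IsRootedConnected (G : SimpleGraph V) (C : Finset V) (x : V) : Prop :=
  x ∈ C ∧ ∀ v ∈ C, ReflTransGen (AdjIn G C) x v

def componentIn (G : SimpleGraph V) (D : Finset V) (v : V) : Finset V :=
  D.filter (ReflTransGen (AdjIn G D) v)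

section Components

variable {G : SimpleGraph V} {D : Finset V} {u v w : V}

instance : Std.Symm (AdjIn G D) :=
  ⟨fun _ _ h => ⟨h.1.symm, h.2.2, h.2.1⟩⟩

lemma mem_of_reflTransGen_adjIn (hv : v ∈ D) (h : ReflTransGen (AdjIn G D) v w) : w ∈ D := by
  rcases h.cases_tail with rfl | ⟨_, _, hw⟩
  exacts [hv, hw.2.2]

lemma componentIn_subset : componentIn G D v ⊆ D :=
  Finset.filter_subset _ _

lemma mem_componentIn_self (hv : v ∈ D) : v ∈ componentIn G D v :=
  Finset.mem_filter.2 ⟨hv, .refl⟩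

lemma componentIn_eq_of_mem (hw : w ∈ componentIn G D v) :
    componentIn G D w = componentIn G D v := by
  have hvw := (Finset.mem_filter.1 hw).2
  ext u
  simp only [componentIn, Finset.mem_filter]
  exact and_congr_right fun _ => ⟨hvw.trans, (Std.Symm.symm _ _ hvw).trans⟩

lemma mem_componentIn_of_adj (hu : u ∈ componentIn G D v) (hw : w ∈ D) (hadj : G.Adj u w) :
    w ∈ componentIn G D v := by
  obtain ⟨huD, hvu⟩ := Finset.mem_filter.1 hu
  exact Finset.mem_filter.2 ⟨hw, hvu.tail ⟨hadj, huD, hw⟩⟩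

lemma reflTransGen_adjIn_restrict {C : Finset V}
    (hC : ∀ a, ReflTransGen (AdjIn G D) v a → a ∈ C) (h : ReflTransGen (AdjIn G D) v w) :
    ReflTransGen (AdjIn G C) v w := by
  induction h with
  | refl => exact .refl
  | tail hva hab ih => exact ih.tail ⟨hab.1, hC _ hva, hC _ (hva.tail hab)⟩

lemma isRootedConnected_componentIn (hv : v ∈ D) :
    IsRootedConnected G (componentIn G D v) v := by
  refine ⟨mem_componentIn_self hv, fun w hw => ?_⟩
  refine reflTransGen_adjIn_restrict (fun a hva => ?_) (Finset.mem_filter.1 hw).2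
  exact Finset.mem_filter.2 ⟨mem_of_reflTransGen_adjIn hv hva, hva⟩

end Components

def animalSum (G : SimpleGraph V) (lam : ℝ) (A : Finset V) (x : V) : ℝ :=
  ∑ C ∈ A.powerset.filter (IsRootedConnected G · x), lam ^ C.card

section Animals

variable {G : SimpleGraph V} {lam : ℝ}

lemma animalSum_nonneg (hlam : 0 ≤ lam) (A : Finset V) (x : V) : 0 ≤ animalSum G lam A x :=
  Finset.sum_nonneg fun _ _ => pow_nonneg hlam _

lemma animalSum_of_notMem {A : Finset V} {x : V} (hx : x ∉ A) : animalSum G lam A x = 0 :=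
  Finset.sum_eq_zero fun _ hC => absurd
    (Finset.mem_powerset.1 (Finset.mem_filter.1 hC).1 (Finset.mem_filter.1 hC).2.1) hx

variable [DecidableEq V] {C : Finset V} {x : V}

lemma IsRootedConnected.exists_adj_mem_componentIn_erase (hC : IsRootedConnected G C x)
    {v : V} (hv : v ∈ C.erase x) : ∃ y ∈ componentIn G (C.erase x) v, G.Adj x y := by
  suffices ∀ w, ReflTransGen (AdjIn G C) x w →
      w = x ∨ (w ∈ C.erase x ∧ ∃ y ∈ componentIn G (C.erase x) w, G.Adj x y) from
    ((this v (hC.2 v (Finset.mem_of_mem_erase hv))).resolve_left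
      (Finset.ne_of_mem_erase hv)).2
  intro w hw
  induction hw with
  | refl => exact .inl rfl
  | @tail a b _ hab ih =>
    by_cases hbx : b = x
    · exact .inl hbx
    have hbD : b ∈ C.erase x := Finset.mem_erase.2 ⟨hbx, hab.2.2⟩
    refine .inr ⟨hbD, ?_⟩
    rcases ih with rfl | ⟨haD, y, hy, hxy⟩
    · exact ⟨b, mem_componentIn_self hbD, hab.1⟩
    · have hba : a ∈ componentIn G (C.erase x) b :=
        mem_componentIn_of_adj (mem_componentIn_self hbD) haD hab.1.symm
      exact ⟨y, by rwa [← componentIn_eq_of_mem hba], hxy⟩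

lemma IsRootedConnected.exists_decomposition (hlf : G.LocallyFinite)
    (hC : IsRootedConnected G C x) :
    ∃ f : V → Finset V,
      (∀ y, f y = ∅ ∨ (f y ⊆ C.erase x ∧ IsRootedConnected G (f y) y)) ∧
      (∀ y z, y ≠ z → Disjoint (f y) (f z)) ∧
      C.erase x = (nbr G hlf x).biUnion f := by
  set D := C.erase x
  have hrep : ∀ K : Finset V, ∃ y, ∀ v ∈ D, K = componentIn G D v →
      y ∈ K ∧ y ∈ nbr G hlf x := by
    intro K
    by_cases hK : ∃ v ∈ D, K = componentIn G D v
    · obtain ⟨v, hv, rfl⟩ := hK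
      obtain ⟨y, hy, hxy⟩ := hC.exists_adj_mem_componentIn_erase hv
      exact ⟨y, fun _ _ _ => ⟨hy, (SimpleGraph.mem_neighborFinset _ _ _).2 hxy⟩⟩
    · exact ⟨x, fun v hv hKv => (hK ⟨v, hv, hKv⟩).elim⟩
  choose rep hrep using hrep
  have hrep_mem : ∀ v ∈ D, rep (componentIn G D v) ∈ componentIn G D v :=
    fun v hv => (hrep _ v hv rfl).1
  -- `rep K` is a neighbour of `x` in the component `K` of `C \ {x}`, and `f y` is the union of
  -- the components represented by `y`; as each component has one representative, `f y` is
  -- either empty or a single component.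
  set f : V → Finset V := fun y => D.filter fun v => rep (componentIn G D v) = y
  refine ⟨f, fun y => ?_, fun y z hyz => ?_, ?_⟩
  · rcases (f y).eq_empty_or_nonempty with hy | ⟨v, hv⟩
    · exact .inl hy
    obtain ⟨hvD, rfl⟩ := Finset.mem_filter.1 hv
    have hyD := componentIn_subset (hrep_mem v hvD)
    have hfy : f (rep (componentIn G D v)) =
        componentIn G D (rep (componentIn G D v)) := by
      rw [componentIn_eq_of_mem (hrep_mem v hvD)]
      ext w
      simp only [f, Finset.mem_filter]
      constructor
      · rintro ⟨hwD, hw⟩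
        have hrw := hrep_mem w hwD
        rw [hw] at hrw
        rw [← (componentIn_eq_of_mem hrw).symm.trans
          (componentIn_eq_of_mem (hrep_mem v hvD))]
        exact mem_componentIn_self hwD
      · intro hw
        exact ⟨componentIn_subset hw, by rw [componentIn_eq_of_mem hw]⟩
    rw [hfy]
    exact .inr ⟨componentIn_subset, isRootedConnected_componentIn hyD⟩
  · exact Finset.disjoint_filter.2 fun v _ hy hz => hyz (hy ▸ hz)
  · ext v
    simp only [f, Finset.mem_biUnion, Finset.mem_filter]
    exact ⟨fun hv => ⟨_, (hrep _ v hv rfl).2, hv, rfl⟩, fun ⟨_, _, hv, _⟩ => hv⟩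

lemma animalSum_le_mul_prod (hlf : G.LocallyFinite) (hlam : 0 ≤ lam) (A : Finset V) (x : V) :
    animalSum G lam A x ≤ lam * ∏ y ∈ nbr G hlf x, (1 + animalSum G lam (A.erase x) y) := by
  set N := nbr G hlf x
  set t : V → Finset (Finset V) :=
    fun y => insert ∅ ((A.erase x).powerset.filter (IsRootedConnected G · y))
  choose! F hF using fun C (hC : IsRootedConnected G C x) => hC.exists_decomposition hlf
  have hrecover : ∀ C, IsRootedConnected G C x → C = insert x (N.biUnion (F C)) :=
    fun C hC => by
      rw [← (hF C hC).2.2, Finset.insert_erase hC.1]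
  have hcard : ∀ C, IsRootedConnected G C x → C.card = ∑ y ∈ N, (F C y).card + 1 :=
    fun C hC => by
      rw [← Finset.card_erase_add_one hC.1, (hF C hC).2.2,
        Finset.card_biUnion fun y _ z _ hyz => (hF C hC).2.1 y z hyz]
  have hmaps : ∀ C ∈ A.powerset.filter (IsRootedConnected G · x), ∀ y ∈ N, F C y ∈ t y := by
    intro C hC y _
    obtain ⟨hCA, hCx⟩ := Finset.mem_filter.1 hC
    rcases (hF C hCx).1 y with hy | ⟨hyC, hy⟩
    · exact hy ▸ Finset.mem_insert_self _ _
    · refine Finset.mem_insert_of_mem (Finset.mem_filter.2 ⟨Finset.mem_powerset.2 ?_, hy⟩)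
      exact hyC.trans (Finset.erase_subset_erase x (Finset.mem_powerset.1 hCA))
  have hsum : ∀ y, ∑ D ∈ t y, lam ^ D.card = 1 + animalSum G lam (A.erase x) y := fun y => by
    rw [Finset.sum_insert fun h => Finset.notMem_empty y (Finset.mem_filter.1 h).2.1]
    simp [animalSum]
  calc animalSum G lam A x
      = lam * ∑ C ∈ A.powerset.filter (IsRootedConnected G · x),
          ∏ y ∈ N, lam ^ (F C y).card := by
        rw [animalSum, Finset.mul_sum]
        refine Finset.sum_congr rfl fun C hC => ?_
        rw [hcard C (Finset.mem_filter.1 hC).2, Finset.prod_pow_eq_pow_sum, pow_succ, mul_comm]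
    _ ≤ lam * ∏ y ∈ N, ∑ D ∈ t y, lam ^ D.card := by
        refine mul_le_mul_of_nonneg_left ?_ hlam
        refine Finset.sum_prod_le_prod_sum_of_injOn F (fun _ _ _ _ => pow_nonneg hlam _) hmaps ?_
        intro C hC C' hC' h
        rw [hrecover C (Finset.mem_filter.1 hC).2, hrecover C' (Finset.mem_filter.1 hC').2,
          Finset.biUnion_congr rfl h]
    _ = lam * ∏ y ∈ N, (1 + animalSum G lam (A.erase x) y) := by
        simp only [hsum]

theorem animalSum_le_exp_one_mul (hlf : G.LocallyFinite) (hlam : 0 ≤ lam) {Δ : ℕ}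
    (hdeg : ∀ v, (nbr G hlf v).card ≤ Δ) (hsmall : Δ * (Real.exp 1 * lam) ≤ 1)
    (A : Finset V) (x : V) :
    animalSum G lam A x ≤ Real.exp 1 * lam := by
  induction A using Finset.strongInduction generalizing x with
  | _ A ih =>
  have hpos : 0 ≤ Real.exp 1 * lam := by positivity
  by_cases hxA : x ∉ A
  · rw [animalSum_of_notMem hxA]
    exact hpos
  push Not at hxA
  calc animalSum G lam A x
      ≤ lam * ∏ y ∈ nbr G hlf x, (1 + animalSum G lam (A.erase x) y) :=
        animalSum_le_mul_prod hlf hlam A x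
    _ ≤ lam * (1 + Real.exp 1 * lam) ^ (nbr G hlf x).card := by
        rw [← Finset.prod_const]
        refine mul_le_mul_of_nonneg_left (Finset.prod_le_prod (fun y _ => ?_) fun y _ => ?_) hlam
        · linarith [animalSum_nonneg (G := G) hlam (A.erase x) y]
        · linarith [ih _ (Finset.erase_ssubset hxA) y]
    _ ≤ lam * Real.exp 1 := by
        refine mul_le_mul_of_nonneg_left (Real.one_add_pow_le_exp_one hpos ?_) hlam
        exact le_trans (mul_le_mul_of_nonneg_right (by exact_mod_cast hdeg x) hpos) hsmall
    _ = Real.exp 1 * lam := mul_comm _ _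

end Animals

def nbrUp (G : SimpleGraph V) (hlf : G.LocallyFinite) (o a : V) : Finset V :=
  (nbr G hlf a).filter fun z => G.dist o z = G.dist o a + 1

def nbrDown (G : SimpleGraph V) (hlf : G.LocallyFinite) (o a : V) : Finset V :=
  (nbr G hlf a).filter fun z => G.dist o z ≤ G.dist o a

section Growth

variable {G : SimpleGraph V} (hlf : G.LocallyFinite) (o : V)

lemma lt_dist_of_mem_nbrUp {i : ℕ} {a b : V} (hb : b ∈ nbrUp G hlf o a) (ha : i ≤ G.dist o a) :
    i < G.dist o b := by
  rw [(Finset.mem_filter.1 hb).2]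
  omega

lemma disjoint_nbrUp_nbrDown (a : V) : Disjoint (nbrUp G hlf o a) (nbrDown G hlf o a) :=
  Finset.disjoint_filter.2 fun _ _ h1 h2 => by omega

variable [DecidableEq V]

lemma nbrUp_union_nbrDown (a : V) : nbrUp G hlf o a ∪ nbrDown G hlf o a = nbr G hlf a := by
  rw [nbrUp, nbrDown, ← Finset.filter_or, Finset.filter_true_of_mem]
  intro b hb
  have := (SimpleGraph.mem_neighborFinset _ _ _).1 hb
  have h : G.dist o b ≤ G.dist o a + G.dist a b := this.reachable.dist_triangle_right o
  rw [SimpleGraph.dist_eq_one_iff_adj.2 this] at h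
  omega

lemma card_nbr_inter_eq_sum (p : V → Prop) [DecidablePred p] (a : V) (C : Finset V) :
    (((nbr G hlf a).filter p) ∩ C).card = ∑ b ∈ C, if G.Adj a b ∧ p b then 1 else 0 := by
  rw [← Finset.card_filter]
  congr 1
  ext b
  simp [nbr, and_comm]

/-- Each edge of `C` that goes up from one endpoint goes down from the other. -/
lemma sum_card_nbrUp_inter_le (C : Finset V) :
    ∑ a ∈ C, (nbrUp G hlf o a ∩ C).card ≤ ∑ a ∈ C, (nbrDown G hlf o a ∩ C).card := by
  simp only [nbrUp, nbrDown, card_nbr_inter_eq_sum]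
  rw [Finset.sum_comm]
  refine Finset.sum_le_sum fun a _ => Finset.sum_le_sum fun b _ => ?_
  by_cases h : G.Adj b a ∧ G.dist o a = G.dist o b + 1
  · rw [if_pos h, if_pos ⟨h.1.symm, by omega⟩]
  · rw [if_neg h]
    exact Nat.zero_le _

theorem card_mul_le_sum_spin_nbr_sdiff {g : ℕ} (hgrow : IsGrowing G hlf g o)
    {C : Finset V} {σ : V → Bool}
    (hup : ∀ a ∈ C, ∀ b ∈ nbrUp G hlf o a, b ∉ C → σ b = true) :
    (g : ℝ) * C.card ≤ ∑ a ∈ C, ∑ b ∈ nbr G hlf a \ C, spin (σ b) := by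
  have hloc : ∀ a ∈ C, (g : ℝ) + (nbrDown G hlf o a ∩ C).card - (nbrUp G hlf o a ∩ C).card ≤
      ∑ b ∈ nbr G hlf a \ C, spin (σ b) := by
    intro a ha
    have hUp : ∑ b ∈ nbrUp G hlf o a \ C, spin (σ b) = (nbrUp G hlf o a \ C).card := by
      rw [Finset.card_eq_sum_ones, Nat.cast_sum, Nat.cast_one]
      refine Finset.sum_congr rfl fun b hb => ?_
      rw [Finset.mem_sdiff] at hb
      rw [hup a ha b hb.1 hb.2, spin, if_pos rfl]
    have hDown : -((nbrDown G hlf o a \ C).card : ℝ) ≤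
        ∑ b ∈ nbrDown G hlf o a \ C, spin (σ b) := by
      rw [Finset.card_eq_sum_ones, Nat.cast_sum, Nat.cast_one, ← Finset.sum_neg_distrib]
      exact Finset.sum_le_sum fun b _ => by cases σ b <;> norm_num [spin]
    have hgr : ((nbrDown G hlf o a).card : ℝ) + g ≤ (nbrUp G hlf o a).card := by
      exact_mod_cast hgrow a
    have hUpC := Finset.card_sdiff_add_card_inter (nbrUp G hlf o a) C
    have hDownC := Finset.card_sdiff_add_card_inter (nbrDown G hlf o a) C
    rw [← nbrUp_union_nbrDown hlf o a, Finset.union_sdiff_distrib, Finset.sum_union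
      ((disjoint_nbrUp_nbrDown hlf o a).mono Finset.sdiff_subset Finset.sdiff_subset), hUp]
    push_cast [← hUpC, ← hDownC] at hgr ⊢
    linarith
  have hpair : (0 : ℝ) ≤
      ∑ a ∈ C, (((nbrDown G hlf o a ∩ C).card : ℝ) - (nbrUp G hlf o a ∩ C).card) := by
    rw [Finset.sum_sub_distrib, sub_nonneg]
    exact_mod_cast sum_card_nbrUp_inter_le hlf o C
  calc (g : ℝ) * C.card ≤ ∑ a ∈ C, ((g : ℝ) + (((nbrDown G hlf o a ∩ C).card : ℝ) -
        (nbrUp G hlf o a ∩ C).card)) := by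
        rw [Finset.sum_add_distrib, Finset.sum_const, nsmul_eq_mul, mul_comm]
        linarith
    _ ≤ _ := Finset.sum_le_sum fun a ha => by linarith [hloc a ha]

end Growth

variable [DecidableEq V]

def flipOn (C : Finset V) (σ : V → Bool) : V → Bool :=
  fun v => if v ∈ C then !σ v else σ v

lemma flipOn_flipOn (C : Finset V) (σ : V → Bool) : flipOn C (flipOn C σ) = σ := by
  funext v
  unfold flipOn
  split_ifs <;> simp

def configs (A : Finset V) (η : V → Bool) : Finset (V → Bool) :=
  (A.pi fun _ => (Finset.univ : Finset Bool)).image (patch A η)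

lemma mem_configs {A : Finset V} {η σ : V → Bool} :
    σ ∈ configs A η ↔ ∀ v ∉ A, σ v = η v := by
  constructor
  · rintro hσ v hv
    obtain ⟨p, -, rfl⟩ := Finset.mem_image.1 hσ
    exact dif_neg hv
  · intro hσ
    refine Finset.mem_image.2 ⟨fun a _ => σ a, Finset.mem_pi.2 fun _ _ => Finset.mem_univ _, ?_⟩
    funext v
    by_cases hv : v ∈ A
    · exact dif_pos hv
    · exact (dif_neg hv).trans (hσ v hv).symm

lemma flipOn_mem_configs {A C : Finset V} {η σ : V → Bool} (hCA : C ⊆ A)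
    (hσ : σ ∈ configs A η) :
    flipOn C σ ∈ configs A η := by
  rw [mem_configs] at hσ ⊢
  intro v hv
  rw [flipOn, if_neg fun hvC => hv (hCA hvC), hσ v hv]

lemma wsum_eq_sum_configs (E : (V → Bool) → ℝ) (A : Finset V) (η : V → Bool)
    (f : (V → Bool) → ℝ) :
    wsum E A η f = ∑ σ ∈ configs A η, Real.exp (E σ) * f σ := by
  rw [wsum, configs, Finset.sum_image]
  intro p _ q _ hpq
  funext a ha
  simpa [patch, ha] using congrFun hpq a

lemma wsum_one_pos (E : (V → Bool) → ℝ) (A : Finset V) (η : V → Bool) :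
    0 < wsum E A η (fun _ => 1) := by
  rw [wsum_eq_sum_configs]
  exact Finset.sum_pos (fun σ _ => by simpa using Real.exp_pos (E σ))
    ⟨η, mem_configs.2 fun _ _ => rfl⟩

lemma sum_flipOn_le_sum_configs {A C : Finset V} {η : V → Bool} {S : Finset (V → Bool)}
    (hCA : C ⊆ A) (hS : S ⊆ configs A η) {f : (V → Bool) → ℝ} (hf : ∀ σ, 0 ≤ f σ) :
    ∑ σ ∈ S, f (flipOn C σ) ≤ ∑ σ ∈ configs A η, f σ := by
  rw [← Finset.sum_image fun σ _ τ _ h => by rw [← flipOn_flipOn C σ, h, flipOn_flipOn]]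
  refine Finset.sum_le_sum_of_subset_of_nonneg ?_ fun σ _ _ => hf σ
  intro τ hτ
  obtain ⟨σ, hσ, rfl⟩ := Finset.mem_image.1 hτ
  exact flipOn_mem_configs hCA (hS hσ)

theorem gProb_le_sum_of_flipOn (E : (V → Bool) → ℝ) (A : Finset V) (η : V → Bool)
    (P : (V → Bool) → Prop) (K : (V → Bool) → Finset V) (𝒞 : Finset (Finset V))
    (h𝒞 : ∀ C ∈ 𝒞, C ⊆ A) (r : Finset V → ℝ) (hr : ∀ C ∈ 𝒞, 0 ≤ r C)
    (hK : ∀ σ ∈ configs A η, P σ →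
      K σ ∈ 𝒞 ∧ Real.exp (E σ) ≤ r (K σ) * Real.exp (E (flipOn (K σ) σ))) :
    gProb E A η P ≤ ∑ C ∈ 𝒞, r C := by
  set Ω := configs A η
  have hfiber : ∀ C ∈ 𝒞, ∑ σ ∈ (Ω.filter P).filter (K · = C), Real.exp (E σ) ≤
      r C * ∑ σ ∈ Ω, Real.exp (E σ) := by
    intro C hC
    set F := (Ω.filter P).filter (K · = C)
    have hF : ∀ σ ∈ F, σ ∈ Ω ∧ P σ ∧ K σ = C := fun σ hσ => by
      simp only [F, Finset.mem_filter] at hσ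
      exact ⟨hσ.1.1, hσ.1.2, hσ.2⟩
    calc ∑ σ ∈ F, Real.exp (E σ)
        ≤ ∑ σ ∈ F, r C * Real.exp (E (flipOn C σ)) := Finset.sum_le_sum fun σ hσ => by
          obtain ⟨hσΩ, hPσ, rfl⟩ := hF σ hσ
          exact (hK σ hσΩ hPσ).2
      _ ≤ r C * ∑ σ ∈ Ω, Real.exp (E σ) := by
          rw [← Finset.mul_sum]
          refine mul_le_mul_of_nonneg_left ?_ (hr C hC)
          exact sum_flipOn_le_sum_configs (h𝒞 C hC) (fun σ hσ => (hF σ hσ).1)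
            fun _ => (Real.exp_pos _).le
  have hmaps : ∀ σ ∈ Ω.filter P, K σ ∈ 𝒞 := fun σ hσ =>
    (hK σ (Finset.mem_filter.1 hσ).1 (Finset.mem_filter.1 hσ).2).1
  rw [gProb, gExp, div_le_iff₀ (wsum_one_pos E A η), wsum_eq_sum_configs, wsum_eq_sum_configs]
  calc ∑ σ ∈ Ω, Real.exp (E σ) * (if P σ then 1 else 0)
      = ∑ C ∈ 𝒞, ∑ σ ∈ (Ω.filter P).filter (K · = C), Real.exp (E σ) := by
        rw [Finset.sum_fiberwise_of_maps_to hmaps, Finset.sum_filter]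
        simp
    _ ≤ ∑ C ∈ 𝒞, r C * ∑ σ ∈ Ω, Real.exp (E σ) := Finset.sum_le_sum hfiber
    _ = (∑ C ∈ 𝒞, r C) * ∑ σ ∈ Ω, Real.exp (E σ) * 1 := by
        simp only [mul_one, Finset.sum_mul]

variable {G : SimpleGraph V}

lemma spin_flipOn (C : Finset V) (σ : V → Bool) (v : V) :
    spin (flipOn C σ v) = if v ∈ C then -spin (σ v) else spin (σ v) := by
  unfold flipOn
  split_ifs <;> cases σ v <;> simp [spin]

lemma sum_adj_mul_flip {W C : Finset V} (hCW : C ⊆ W) (s : V → ℝ) :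
    ∑ a ∈ W, ∑ b ∈ W.filter (fun b => G.Adj a b),
        (if a ∈ C then -s a else s a) * (if b ∈ C then -s b else s b) =
      ∑ a ∈ W, ∑ b ∈ W.filter (fun b => G.Adj a b), s a * s b -
        4 * ∑ a ∈ C, ∑ b ∈ (W \ C).filter (fun b => G.Adj a b), s a * s b := by
  have hpt : ∀ a b, (if a ∈ C then -s a else s a) * (if b ∈ C then -s b else s b) =
      s a * s b - 2 * (if a ∈ C ∧ b ∉ C then s a * s b else 0) -
        2 * (if b ∈ C ∧ a ∉ C then s b * s a else 0) := by
    intro a b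
    by_cases ha : a ∈ C <;> by_cases hb : b ∈ C <;> simp [ha, hb] <;> ring
  have hswap : ∑ a ∈ W, ∑ b ∈ W.filter (fun b => G.Adj a b),
        (if b ∈ C ∧ a ∉ C then s b * s a else 0) =
      ∑ a ∈ W, ∑ b ∈ W.filter (fun b => G.Adj a b),
        (if a ∈ C ∧ b ∉ C then s a * s b else 0) := by
    simp only [Finset.sum_filter]
    rw [Finset.sum_comm]
    simp only [G.adj_comm]
  simp only [hpt, Finset.sum_sub_distrib, ← Finset.mul_sum, hswap,
    Finset.sum_sum_ite_mem_and_notMem hCW]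
  ring

lemma cl_sdiff_filter_adj {A C : Finset V} (hlf : G.LocallyFinite) {a : V} (ha : a ∈ A) :
    (cl G hlf A \ C).filter (fun b => G.Adj a b) = nbr G hlf a \ C := by
  ext b
  simp only [Finset.mem_filter, Finset.mem_sdiff, cl, vbd, Finset.mem_union, Finset.mem_biUnion,
    nbr, SimpleGraph.mem_neighborFinset]
  constructor
  · rintro ⟨⟨-, hbC⟩, hab⟩
    exact ⟨hab, hbC⟩
  · rintro ⟨hab, hbC⟩
    exact ⟨⟨by by_cases hbA : b ∈ A <;> simp [hbA]; exact ⟨a, ha, hab⟩, hbC⟩, hab⟩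

lemma energyB_flipOn (hlf : G.LocallyFinite) {A C : Finset V} (hCA : C ⊆ A) (σ : V → Bool) :
    energyB G hlf A (flipOn C σ) = energyB G hlf A σ -
      2 * ∑ a ∈ C, ∑ b ∈ nbr G hlf a \ C, spin (σ a) * spin (σ b) := by
  have hCW : C ⊆ cl G hlf A := hCA.trans Finset.subset_union_left
  have hbd : ∀ a ∈ C, ∑ b ∈ (cl G hlf A \ C).filter (fun b => G.Adj a b),
      spin (σ a) * spin (σ b) = ∑ b ∈ nbr G hlf a \ C, spin (σ a) * spin (σ b) := fun a ha => by
    rw [cl_sdiff_filter_adj hlf (hCA ha)]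
  simp only [energyB, spin_flipOn, sum_adj_mul_flip hCW, Finset.sum_congr rfl hbd]
  ring

theorem energyB_add_le_energyB_flipOn (hlf : G.LocallyFinite) {g : ℕ} {o : V}
    (hgrow : IsGrowing G hlf g o) {U C : Finset V} {σ : V → Bool} (hCU : C ⊆ U)
    (hCσ : ∀ a ∈ C, σ a = false) (hup : ∀ a ∈ C, ∀ b ∈ nbrUp G hlf o a, b ∉ C → σ b = true) :
    energyB G hlf U σ + 2 * g * C.card ≤ energyB G hlf U (flipOn C σ) := by
  have hminus : ∑ a ∈ C, ∑ b ∈ nbr G hlf a \ C, spin (σ a) * spin (σ b) =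
      -∑ a ∈ C, ∑ b ∈ nbr G hlf a \ C, spin (σ b) := by
    simp only [← Finset.sum_neg_distrib]
    exact Finset.sum_congr rfl fun a ha => Finset.sum_congr rfl fun b _ => by
      rw [hCσ a ha, spin, if_neg Bool.false_ne_true, neg_one_mul]
  rw [energyB_flipOn hlf hCU, hminus]
  linarith [card_mul_le_sum_spin_nbr_sdiff hlf o hgrow hup]

theorem gProb_eq_false_le_animalSum (hlf : G.LocallyFinite) {g : ℕ} {o : V}
    (hgrow : IsGrowing G hlf g o) {β : ℝ} (hβ : 0 ≤ β) {U : Finset V} {η : V → Bool}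
    (hη : ∀ a ∈ U, ∀ b ∈ nbrUp G hlf o a, b ∉ U → η b = true) {x : V} (hx : x ∈ U) :
    gProb (fun σ => β * energyB G hlf U σ) U η (fun σ => σ x = false) ≤
      animalSum G (Real.exp (-(2 * g * β))) U x := by
  refine gProb_le_sum_of_flipOn _ U η _ (fun σ => componentIn G (U.filter (σ · = false)) x) _
    (fun _ hC => Finset.mem_powerset.1 (Finset.mem_filter.1 hC).1) _
    (fun _ _ => pow_nonneg (Real.exp_pos _).le _) fun σ hσ hσx => ?_
  set D := U.filter (σ · = false)
  set C := componentIn G D x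
  have hxD : x ∈ D := Finset.mem_filter.2 ⟨hx, hσx⟩
  have hCU : C ⊆ U := componentIn_subset.trans (Finset.filter_subset _ _)
  have hCσ : ∀ a ∈ C, σ a = false := fun a ha => (Finset.mem_filter.1 (componentIn_subset ha)).2
  have hup : ∀ a ∈ C, ∀ b ∈ nbrUp G hlf o a, b ∉ C → σ b = true := by
    intro a ha b hb hbC
    by_cases hbU : b ∈ U
    · by_contra hσb
      have hadj := (SimpleGraph.mem_neighborFinset _ _ _).1 (Finset.mem_filter.1 hb).1
      exact hbC (mem_componentIn_of_adj ha
        (Finset.mem_filter.2 ⟨hbU, by simpa using hσb⟩) hadj)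
    · rw [mem_configs.1 hσ b hbU]
      exact hη a (hCU ha) b hb hbU
  refine ⟨Finset.mem_filter.2 ⟨Finset.mem_powerset.2 hCU, isRootedConnected_componentIn hxD⟩, ?_⟩
  have henergy := energyB_add_le_energyB_flipOn hlf hgrow hCU hCσ hup
  rw [← Real.exp_nat_mul, ← Real.exp_add]
  refine Real.exp_le_exp.2 ?_
  nlinarith [mul_le_mul_of_nonneg_left henergy hβ]

end IsingGlauber

theorem statement10_general {V : Type*} [DecidableEq V]
    (G : SimpleGraph V) (hlf : G.LocallyFinite)
    (g Δ : ℕ) (o : V)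
    (hgrow : IsGrowing G hlf g o)
    (hΔ : ∀ v : V, (nbr G hlf v).card ≤ Δ)
    (δ : ℝ) (hδ : δ = 1 + Real.log ((Δ : ℝ) + 1))
    (β β' : ℝ) (hβ' : β' = 2 * (g : ℝ) * β - δ) (hpos : 0 < β')
    (i : ℕ) (Bm : Finset V)
    (S : Finset V) (hS : ∀ v ∈ S, G.dist o v = i)
    (U : Finset V) (hU : U = Bm.filter (fun v => i + 1 ≤ G.dist o v) ∪ S)
    (x : V) (hx : x ∈ S) :
    gProb (fun σ => β * energyB G hlf U σ) U
        (fun v => if G.dist o v ≤ i then false else true)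
        (fun σ => σ x = false) ≤
      Real.exp (-β') / (1 - Real.exp (-β')) := by
  set lam := Real.exp (-(2 * g * β))
  have hβ : 0 ≤ β := by
    have : 0 ≤ Real.log ((Δ : ℝ) + 1) := Real.log_nonneg (by simp)
    nlinarith [Nat.cast_nonneg (α := ℝ) g]
  have hkey : Real.exp 1 * lam * (Δ + 1) = Real.exp (-β') := by
    rw [← Real.exp_log (by positivity : (0 : ℝ) < Δ + 1), ← Real.exp_add, ← Real.exp_add, hβ', hδ]
    ring_nf
  have hlt : Real.exp (-β') < 1 := Real.exp_lt_one_iff.2 (neg_neg_of_pos hpos)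
  have hUi : ∀ u ∈ U, i ≤ G.dist o u := by
    simp only [hU, Finset.mem_union, Finset.mem_filter]
    rintro u (⟨-, hu⟩ | hu)
    exacts [by omega, (hS u hu).ge]
  have hη : ∀ a ∈ U, ∀ b ∈ nbrUp G hlf o a, b ∉ U →
      (fun v => if G.dist o v ≤ i then false else true) b = true := fun a ha b hb _ => by
    simp [lt_dist_of_mem_nbrUp hlf o hb (hUi a ha)]
  calc _ ≤ animalSum G lam U x :=
        gProb_eq_false_le_animalSum hlf hgrow hβ hη (hU ▸ Finset.mem_union_right _ hx)
    _ ≤ Real.exp 1 * lam := animalSum_le_exp_one_mul hlf (Real.exp_pos _).le hΔ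
        (by nlinarith [Real.exp_pos 1, Real.exp_pos (-(2 * g * β))]) U x
    _ ≤ Real.exp (-β') := hkey ▸ le_mul_of_one_le_right (by positivity) (by simp)
    _ ≤ Real.exp (-β') / (1 - Real.exp (-β')) :=
        le_div_self (Real.exp_pos _).le (by linarith) (by linarith [Real.exp_pos (-β')])

/-- inequality (3.9) of the paper: under the minus boundary condition
on `B_i \ S` and plus on `∂_V B`, the probability that a given spin `x ∈ S` is minus
is at most `e^{-β'}/(1 - e^{-β'})`, with `β' = 2gβ - δ > 0`, `δ = 1 + log(Δ+1)`. -/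
theorem statement10 {V : Type*} [DecidableEq V] [Infinite V]
    (G : SimpleGraph V) (hlf : G.LocallyFinite) (hconn : G.Connected)
    (g Δ : ℕ) (hg : 1 ≤ g) (o : V)
    (hgrow : IsGrowing G hlf g o)
    (hΔ : ∀ v : V, (nbr G hlf v).card ≤ Δ)
    (δ : ℝ) (hδ : δ = 1 + Real.log ((Δ : ℝ) + 1))
    (β β' : ℝ) (hβ' : β' = 2 * (g : ℝ) * β - δ) (hpos : 0 < β')
    (m i : ℕ) (him : i ≤ m) (Bm : Finset V) (hBm : ∀ v : V, v ∈ Bm ↔ G.dist o v ≤ m)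
    (S : Finset V) (hS : ∀ v ∈ S, G.dist o v = i)
    (U : Finset V) (hU : U = Bm.filter (fun v => i + 1 ≤ G.dist o v) ∪ S)
    (x : V) (hx : x ∈ S) :
    gProb (fun σ => β * energyB G hlf U σ) U
        (fun v => if G.dist o v ≤ i then false else true)
        (fun σ => σ x = false) ≤
      Real.exp (-β') / (1 - Real.exp (-β')) :=
  statement10_general G hlf g Δ o hgrow hΔ δ hδ β β' hβ' hpos i Bm S hS U hU x hx
end
end
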